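/- arXiv:1509.00766 — 3 statements merged into one kernel-verified Lean document; each statement's English description precedes it below -/
import Mathlib

section
/- Let n ≥ 3, λ_i ≥ λ_j > 0, g ≥ 0, and ε_{ij} = (λ_i/λ_j + λ_j/λ_i + λ_i λ_j g)^{(2-n)/2}. If λ_i/λ_j ≥ 2 then −λ_i ∂_{λ_i} ε_{ij} = ((n-2)/2) ε_{ij}^{n/(n-2)} (λ_i/λ_j − λ_j/λ_i + λ_i λ_j g) ≥ ((n-2)/4) ε_{ij}. -/
/-!
Write `B = λ_i/λ_j + λ_j/λ_i + λ_iλ_j g`, so `ε_{ij} = B^p` with `p = (2-n)/2`, and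
`A = λ_i/λ_j − λ_j/λ_i + λ_iλ_j g`. Since `λ_i ∂_{λ_i} B = A`, the chain rule gives
`−λ_i ∂_{λ_i} ε_{ij} = ((n-2)/2) B^{p-1} A`, and `B^{p-1} = ε_{ij}^{n/(n-2)}`.
For the bound, `ε_{ij} = B^{p-1} B`, and `B ≤ 2A` as soon as `x = λ_i/λ_j ≥ 2`,
because then `x⁻¹ ≤ 1/2`.
-/

open Real

lemma hasDerivAt_div_add_div_add_mul_mul (a g : ℝ) {x : ℝ} (hx : x ≠ 0) :
    HasDerivAt (fun l : ℝ => l / a + a / l + l * a * g) (1 / a - a / x ^ 2 + a * g) x := by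
  have hinv : HasDerivAt (fun l : ℝ => a / l) (-(a / x ^ 2)) x := by
    simpa [div_eq_mul_inv] using (hasDerivAt_inv hx).const_mul a
  refine ((((hasDerivAt_id' x).div_const a).add hinv).add
    (((hasDerivAt_id' x).mul_const a).mul_const g)).congr_deriv ?_
  ring

lemma mul_one_div_sub_div_sq_add_mul {a g x : ℝ} (hx : x ≠ 0) :
    x * (1 / a - a / x ^ 2 + a * g) = x / a - a / x + x * a * g := by
  field_simp

lemma rpow_rpow_div_sub_two {B n : ℝ} (hB : 0 ≤ B) (hn : n ≠ 2) :
    (B ^ ((2 - n) / 2)) ^ (n / (n - 2)) = B ^ ((2 - n) / 2 - 1) := by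
  rw [← rpow_mul hB]
  congr 1
  field_simp [sub_ne_zero.mpr hn]
  ring

lemma add_inv_add_le_two_mul_sub_inv_add {x c : ℝ} (hx : 2 ≤ x) (hc : 0 ≤ c) :
    x + x⁻¹ + c ≤ 2 * (x - x⁻¹ + c) := by
  have hinv : x⁻¹ ≤ 1 / 2 := by
    rw [inv_eq_one_div]
    gcongr
  linarith

theorem interaction_derivative_lower_bound_general (n : ℕ) (hn : 3 ≤ n) (li lj g : ℝ)
    (hj : 0 < lj) (hg : 0 ≤ g) (h2 : 2 ≤ li / lj) :
    ∀ D : ℝ,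
      HasDerivAt (fun l : ℝ => (l / lj + lj / l + l * lj * g) ^ ((2 - (n : ℝ)) / 2)) D li →
      -(li * D) =
          (((n : ℝ) - 2) / 2) *
            (((li / lj + lj / li + li * lj * g) ^ ((2 - (n : ℝ)) / 2)) ^ ((n : ℝ) / ((n : ℝ) - 2))) *
            (li / lj - lj / li + li * lj * g) ∧
        (((n : ℝ) - 2) / 4) * ((li / lj + lj / li + li * lj * g) ^ ((2 - (n : ℝ)) / 2)) ≤
          -(li * D) := by
  intro D hD
  have hn3 : (3 : ℝ) ≤ n := by exact_mod_cast hn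
  have hli : 0 < li := (div_pos_iff_of_pos_right hj).mp (by linarith)
  have hc : 0 ≤ li * lj * g := by positivity
  have hA := mul_one_div_sub_div_sq_add_mul (a := lj) (g := g) hli.ne'
  set B := li / lj + lj / li + li * lj * g
  set A := li / lj - lj / li + li * lj * g
  have hB : 0 < B := by positivity
  have hD_eq : D = (1 / lj - lj / li ^ 2 + lj * g) * ((2 - n) / 2) * B ^ ((2 - (n : ℝ)) / 2 - 1) :=
    hD.unique ((hasDerivAt_div_add_div_add_mul_mul lj g hli.ne').rpow_const (Or.inl hB.ne'))
  have hneg_deriv : -(li * D) = ((n - 2) / 2) * B ^ ((2 - (n : ℝ)) / 2 - 1) * A := by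
    rw [hD_eq, ← hA]
    ring
  refine ⟨by rw [hneg_deriv, rpow_rpow_div_sub_two hB.le (by linarith)], ?_⟩
  have hBA : B ≤ 2 * A := by
    simpa only [inv_div] using add_inv_add_le_two_mul_sub_inv_add h2 hc
  have hε : B ^ ((2 - (n : ℝ)) / 2) = B ^ ((2 - (n : ℝ)) / 2 - 1) * B := by
    rw [rpow_sub_one hB.ne', div_mul_cancel₀ _ hB.ne']
  have hpos : 0 ≤ (n - 2 : ℝ) * B ^ ((2 - (n : ℝ)) / 2 - 1) :=
    mul_nonneg (by linarith) (rpow_pos_of_pos hB _).le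
  rw [hneg_deriv, hε]
  linarith [mul_le_mul_of_nonneg_left hBA hpos]

/-- Lower bound for the λ-derivative of the bubble interaction when the scales are ordered:
for `λ_i ≥ λ_j > 0`, `g ≥ 0` and `λ_i/λ_j ≥ 2`,
`−λ_i ∂_{λ_i} ε_{ij} = ((n-2)/2) ε_{ij}^{n/(n-2)} (λ_i/λ_j − λ_j/λ_i + λ_i λ_j g) ≥ ((n-2)/4) ε_{ij}`. -/
theorem interaction_derivative_lower_bound (n : ℕ) (hn : 3 ≤ n) (li lj g : ℝ)
    (hj : 0 < lj) (hij : lj ≤ li) (hg : 0 ≤ g) (h2 : 2 ≤ li / lj) :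
    ∀ D : ℝ,
      HasDerivAt (fun l : ℝ => (l / lj + lj / l + l * lj * g) ^ ((2 - (n : ℝ)) / 2)) D li →
      -(li * D) =
          (((n : ℝ) - 2) / 2) *
            (((li / lj + lj / li + li * lj * g) ^ ((2 - (n : ℝ)) / 2)) ^ ((n : ℝ) / ((n : ℝ) - 2))) *
            (li / lj - lj / li + li * lj * g) ∧
        (((n : ℝ) - 2) / 4) * ((li / lj + lj / li + li * lj * g) ^ ((2 - (n : ℝ)) / 2)) ≤
          -(li * D) :=
  interaction_derivative_lower_bound_general n hn li lj g hj hg h2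
end

section
/- On ℝ^n with n ≥ 3, ∫_{ℝ^n} ((r^2−1)/(r^2+1)) (1+r^2)^{-n} dx = 0, where r = |x|. -/
open MeasureTheory

open Set Filter Topology in
private lemma oneD_integral_zero (m : ℕ) :
    ∫ y in Set.Ioi (0 : ℝ),
      y ^ (m + 2) • (((y ^ 2 - 1) / (y ^ 2 + 1)) * ((1 + y ^ 2) ^ (m + 3))⁻¹) = 0 := by
  set F : ℝ → ℝ := fun y => -((1 / (m + 3 : ℝ)) * (y ^ (m + 3) / (1 + y ^ 2) ^ (m + 3))) with hF
  set g : ℝ → ℝ := fun y =>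
    y ^ (m + 2) * (((y ^ 2 - 1) / (y ^ 2 + 1)) * ((1 + y ^ 2) ^ (m + 3))⁻¹) with hg
  have hpos : ∀ y : ℝ, (0 : ℝ) < 1 + y ^ 2 := fun y => by positivity
  have hderiv : ∀ y : ℝ, HasDerivAt F (g y) y := by
    intro y
    have h2 : HasDerivAt (fun y : ℝ => (1 + y ^ 2) ^ (m + 3))
        ((m + 3 : ℕ) * (1 + y ^ 2) ^ (m + 3 - 1) * (2 * y)) y := by
      have := ((hasDerivAt_pow 2 y).const_add 1)
      simpa using this.fun_pow (m + 3)
    have hne : (1 + y ^ 2) ^ (m + 3) ≠ 0 := by positivity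
    have H := ((hasDerivAt_pow (m + 3) y).fun_div h2 hne).const_mul (-(1 / (m + 3 : ℝ)))
    have h31 : m + 3 - 1 = m + 2 := by omega
    rw [h31] at H
    convert H using 1
    · rfl
    · rfl
    · ext y; simp [hF]
    · rw [hg]
      have h0 : ((1 + y ^ 2) ^ (m + 3)) ^ 2 ≠ 0 := by positivity
      field_simp
      push_cast
      ring
  have hcont : Continuous g := by
    apply Continuous.mul (by fun_prop)
    apply Continuous.mul
    · exact (continuous_pow 2 |>.sub continuous_const).div
        (continuous_pow 2 |>.add continuous_const) (fun y => by positivity)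
    · exact Continuous.inv₀ (by fun_prop) (fun y => by positivity)
  have hint : IntegrableOn g (Set.Ioi (0 : ℝ)) := by
    have h1 : IntegrableOn g (Set.Ioc (0 : ℝ) 1) := hcont.integrableOn_Ioc
    have h2 : IntegrableOn g (Set.Ioi (1 : ℝ)) := by
      refine Integrable.mono' (integrableOn_Ioi_rpow_of_lt (by norm_num : (-2:ℝ) < -1) one_pos)
        (hcont.aestronglyMeasurable.restrict) ?_
      rw [ae_restrict_iff' measurableSet_Ioi]
      refine Filter.Eventually.of_forall fun y hy => ?_
      have hy1 : (1 : ℝ) ≤ y := le_of_lt hy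
      have hy0 : (0 : ℝ) < y := lt_of_lt_of_le one_pos hy1
      have hrpow : y ^ (-2 : ℝ) = ((y ^ 2)⁻¹ : ℝ) := by
        rw [Real.rpow_neg hy0.le, ← Real.rpow_natCast y 2]; norm_num
      rw [hrpow, hg]
      have hb1 : |y ^ 2 - 1| ≤ y ^ 2 + 1 := by
        rw [abs_le]; constructor <;> nlinarith
      have key : |y ^ (m + 2) * ((y ^ 2 - 1) / (y ^ 2 + 1) * ((1 + y ^ 2) ^ (m + 3))⁻¹)|
          ≤ y ^ (m + 2) * ((1 + y ^ 2) ^ (m + 3))⁻¹ := by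
        rw [abs_mul, abs_mul, abs_div, abs_of_nonneg (by positivity : (0:ℝ) ≤ y ^ (m + 2)),
          abs_of_nonneg (by positivity : (0:ℝ) ≤ y ^ 2 + 1),
          abs_of_nonneg (by positivity : (0:ℝ) ≤ ((1 + y ^ 2) ^ (m + 3))⁻¹)]
        have : |y ^ 2 - 1| / (y ^ 2 + 1) ≤ 1 := by
          rw [div_le_one (by positivity)]; linarith
        calc y ^ (m + 2) * (|y ^ 2 - 1| / (y ^ 2 + 1) * ((1 + y ^ 2) ^ (m + 3))⁻¹)
            ≤ y ^ (m + 2) * (1 * ((1 + y ^ 2) ^ (m + 3))⁻¹) := by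
              apply mul_le_mul_of_nonneg_left _ (by positivity)
              exact mul_le_mul_of_nonneg_right this (by positivity)
          _ = y ^ (m + 2) * ((1 + y ^ 2) ^ (m + 3))⁻¹ := by ring
      refine key.trans ?_
      have hle : (y ^ 2) ^ (m + 3) ≤ (1 + y ^ 2) ^ (m + 3) :=
        pow_le_pow_left₀ (by positivity) (by linarith) _
      have : y ^ (m + 2) * ((1 + y ^ 2) ^ (m + 3))⁻¹ ≤ y ^ (m + 2) * ((y ^ 2) ^ (m + 3))⁻¹ := by
        apply mul_le_mul_of_nonneg_left _ (by positivity)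
        exact inv_anti₀ (by positivity) hle
      refine this.trans ?_
      rw [← pow_mul]
      have hyne : y ≠ 0 := ne_of_gt hy0
      have heq : y ^ (m + 2) * (y ^ (2 * (m + 3)))⁻¹ = (y ^ (m + 4))⁻¹ := by
        rw [show 2 * (m + 3) = (m + 2) + (m + 4) from by omega]
        rw [pow_add (y) (m+2) (m+4), mul_inv, ← mul_assoc,
          mul_inv_cancel₀ (pow_ne_zero _ hyne), one_mul]
      rw [heq]
      exact inv_anti₀ (by positivity) (pow_le_pow_right₀ hy1 (by omega))
    have : Set.Ioi (0 : ℝ) = Set.Ioc (0 : ℝ) 1 ∪ Set.Ioi 1 := (Set.Ioc_union_Ioi_eq_Ioi (by norm_num)).symm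
    rw [this]
    exact h1.union h2
  have htend : Tendsto F atTop (𝓝 0) := by
    have hFeq : ∀ y : ℝ, F y = -((1 / (m + 3 : ℝ)) * (y / (1 + y ^ 2)) ^ (m + 3)) := by
      intro y; rw [hF]; rw [div_pow]
    have h1 : Tendsto (fun y : ℝ => y / (1 + y ^ 2)) atTop (𝓝 0) := by
      have := Filter.Tendsto.inv_tendsto_atTop (l := atTop) (f := fun y : ℝ => (1 + y ^ 2) / y) ?_
      · refine this.congr' ?_
        filter_upwards [Filter.eventually_gt_atTop (0:ℝ)] with y hy
        simp only [Pi.inv_apply]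
        field_simp
      · apply Filter.tendsto_atTop_mono' _ _ tendsto_id
        filter_upwards [Filter.eventually_ge_atTop (1 : ℝ)] with y hy
        simp only [id_eq]
        rw [le_div_iff₀ (by positivity)]
        nlinarith [sq_nonneg y]
    have h2 : Tendsto (fun y : ℝ => -((1 / (m + 3 : ℝ)) * (y / (1 + y ^ 2)) ^ (m + 3))) atTop
        (𝓝 (-((1 / (m + 3 : ℝ)) * 0 ^ (m + 3)))) := by
      exact (((h1.pow (m + 3)).const_mul _).neg)
    simpa using h2.congr (fun y => (hFeq y).symm)
  have := integral_Ioi_of_hasDerivAt_of_tendsto' (f := F) (f' := g) (a := 0)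
    (fun x _ => hderiv x) hint htend
  have hF0 : F 0 = 0 := by simp [hF]
  rw [hF0, sub_zero] at this
  simpa [hg, smul_eq_mul] using this

/-- On `ℝ^n`, `n ≥ 3`: `∫ ((r²−1)/(r²+1)) (1+r²)^{-n} dx = 0`, where `r = |x|`. -/
theorem vanishing_cross_interaction (n : ℕ) (hn : 3 ≤ n) :
    (∫ x : EuclideanSpace ℝ (Fin n),
        ((‖x‖ ^ 2 - 1) / (‖x‖ ^ 2 + 1)) * ((1 + ‖x‖ ^ 2) ^ n)⁻¹) = 0 := by
  obtain ⟨m, rfl⟩ : ∃ m, n = m + 3 := ⟨n - 3, by omega⟩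
  have key := MeasureTheory.integral_fun_norm_addHaar
    (volume : Measure (EuclideanSpace ℝ (Fin (m + 3))))
    (fun y : ℝ => ((y ^ 2 - 1) / (y ^ 2 + 1)) * ((1 + y ^ 2) ^ (m + 3))⁻¹)
  rw [show Module.finrank ℝ (EuclideanSpace ℝ (Fin (m + 3))) = m + 3 from
    finrank_euclideanSpace_fin] at key
  rw [show m + 3 - 1 = m + 2 by omega] at key
  rw [key, oneD_integral_zero m]
  simp
end

section
/- Let (a_k)_{k≥1} be a sequence of closed intervals [s_k, t_k) ⊂ [0, ∞) with 2^k ≤ t_k − s_k < 3·2^{k+1}, let J : [0,∞) → ℝ be nonincreasing with J ≥ J_∞, and let F : [0,∞) → [0,∞) be measurable with ∫_{s_k}^{t_k} F² dt ≤ J(s_k) − J(t_k) for all k, and J(u(s_k)) − J_∞ ≤ c (t_{k-1} − s_{k-1})^{(γ+1)/(γ-1)} for a constant c and γ ∈ (0,1), where t_{k-1} ≤ s_k. Then, by the Cauchy–Schwarz (Jensen) inequality, (∫_{s_k}^{t_k} F dt)² ≤ (t_k − s_k) ∫_{s_k}^{t_k} F² dt ≤ c·2^{k+1}·(2^{k-1})^{(γ+1)/(γ-1)},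 and hence ∑_k ∫_{s_k}^{t_k} F dt < ∞. -/
open MeasureTheory intervalIntegral

lemma my_cs (a b : ℝ) (hab : a ≤ b) (F : ℝ → ℝ) (hFmeas : Measurable F)
    (hFpos : ∀ x, 0 ≤ F x)
    (h2 : IntervalIntegrable (fun x => F x ^ 2) volume a b) :
    (∫ x in a..b, F x) ^ 2 ≤ (b - a) * ∫ x in a..b, F x ^ 2 := by
  have hμ : Fact (volume (Set.Ioc a b) < ⊤) := ⟨by simp [Real.volume_Ioc]⟩
  set μ := volume.restrict (Set.Ioc a b) with hμdef
  haveI : IsFiniteMeasure μ := Restrict.isFiniteMeasure _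
  have hi2 : Integrable (fun x => F x ^ 2) μ :=
    (intervalIntegrable_iff_integrableOn_Ioc_of_le hab).mp h2
  have hmem2 : MemLp F 2 μ :=
    (memLp_two_iff_integrable_sq (hFmeas.aestronglyMeasurable)).mpr hi2
  have hmem1 : MemLp (fun _ : ℝ => (1 : ℝ)) 2 μ := memLp_const 1
  have hconj : Real.HolderConjugate 2 2 := Real.HolderConjugate.two_two
  have h2' : (ENNReal.ofReal (2:ℝ)) = 2 := by norm_num
  have hCS := MeasureTheory.integral_mul_le_Lp_mul_Lq_of_nonneg hconj
    (μ := μ) (f := F) (g := fun _ => (1:ℝ))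
    (Filter.Eventually.of_forall hFpos) (Filter.Eventually.of_forall fun _ => zero_le_one)
    (h2' ▸ hmem2) (h2' ▸ hmem1)
  simp only [mul_one, Real.rpow_two, Real.one_rpow, one_pow] at hCS
  have hμ1 : ∫ _x, (1:ℝ) ∂μ = b - a := by
    simp [hμdef, Real.volume_Ioc, ENNReal.toReal_ofReal (sub_nonneg.mpr hab), hab]
  rw [hμ1] at hCS
  have hI2 : (0:ℝ) ≤ ∫ x, F x ^ 2 ∂μ := integral_nonneg fun x => sq_nonneg _
  have hI1 : (0:ℝ) ≤ ∫ x, F x ∂μ := integral_nonneg hFpos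
  have heq1 : (∫ x in a..b, F x) = ∫ x, F x ∂μ := by
    rw [intervalIntegral.integral_of_le hab]
  have heq2 : (∫ x in a..b, F x ^ 2) = ∫ x, F x ^ 2 ∂μ := by
    rw [intervalIntegral.integral_of_le hab]
  rw [heq1, heq2]
  calc (∫ x, F x ∂μ) ^ 2
      ≤ ((∫ x, F x ^ 2 ∂μ) ^ ((1:ℝ)/2) * (b - a) ^ ((1:ℝ)/2)) ^ 2 := by
        apply pow_le_pow_left₀ hI1 hCS
    _ = (b - a) * ∫ x, F x ^ 2 ∂μ := by
        rw [mul_pow, ← Real.rpow_natCast ((∫ x, F x ^ 2 ∂μ) ^ ((1:ℝ)/2)) 2,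
          ← Real.rpow_natCast ((b - a) ^ ((1:ℝ)/2)) 2,
          ← Real.rpow_mul hI2, ← Real.rpow_mul (sub_nonneg.mpr hab)]
        norm_num
        ring

set_option maxHeartbeats 1000000 in
/-- Summability of the time `L¹` norm of the gradient along dyadic intervals:
for intervals `[s_k, t_k)` with `2^k ≤ t_k − s_k < 3·2^{k+1}`, a nonincreasing `J ≥ J_∞`
with `∫_{s_k}^{t_k} F² ≤ J(s_k) − J(t_k)` and `J(s_k) − J_∞ ≤ c (t_{k-1} − s_{k-1})^{(γ+1)/(γ-1)}`,
the Cauchy–Schwarz inequality gives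
`(∫_{s_k}^{t_k} F)² ≤ (t_k − s_k) ∫_{s_k}^{t_k} F² ≤ c' 2^{k+1} (2^{k-1})^{(γ+1)/(γ-1)}`,
and hence `∑_k ∫_{s_k}^{t_k} F < ∞`. -/
theorem dyadic_gradient_summability (s t : ℕ → ℝ) (J F : ℝ → ℝ) (Jinf c γ : ℝ)
    (hγ0 : 0 < γ) (hγ1 : γ < 1)
    (hlen : ∀ k : ℕ, (2 : ℝ) ^ k ≤ t k - s k ∧ t k - s k < 3 * (2 : ℝ) ^ (k + 1))
    (horder : ∀ k : ℕ, t k ≤ s (k + 1))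
    (hs0 : ∀ k : ℕ, 0 ≤ s k)
    (hJmono : ∀ a b : ℝ, 0 ≤ a → a ≤ b → J b ≤ J a)
    (hJlow : ∀ x ≥ (0 : ℝ), Jinf ≤ J x)
    (hFmeas : Measurable F) (hFpos : ∀ x, 0 ≤ F x)
    (hFint : ∀ k : ℕ, IntervalIntegrable F volume (s k) (t k))
    (hF2int : ∀ k : ℕ, IntervalIntegrable (fun x => F x ^ 2) volume (s k) (t k))
    (hsq : ∀ k : ℕ, (∫ x in s k..t k, F x ^ 2) ≤ J (s k) - J (t k))
    (hJk : ∀ k : ℕ, 1 ≤ k →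
      J (s k) - Jinf ≤ c * (t (k - 1) - s (k - 1)) ^ ((γ + 1) / (γ - 1))) :
    (∀ k : ℕ, 1 ≤ k →
        (∫ x in s k..t k, F x) ^ 2 ≤ (t k - s k) * ∫ x in s k..t k, F x ^ 2) ∧
      (∃ c' : ℝ, 0 ≤ c' ∧
        ∀ k : ℕ, 1 ≤ k →
          (t k - s k) * (∫ x in s k..t k, F x ^ 2) ≤
            c' * (2 : ℝ) ^ (k + 1) * ((2 : ℝ) ^ (k - 1)) ^ ((γ + 1) / (γ - 1))) ∧
      Summable (fun k : ℕ => ∫ x in s k..t k, F x) := by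
  set p : ℝ := (γ + 1) / (γ - 1) with hp
  have hst : ∀ k : ℕ, s k ≤ t k := fun k => by
    have h := (hlen k).1
    have : (0:ℝ) < 2 ^ k := by positivity
    linarith
  -- part 1
  have part1 : ∀ k : ℕ, 1 ≤ k →
      (∫ x in s k..t k, F x) ^ 2 ≤ (t k - s k) * ∫ x in s k..t k, F x ^ 2 :=
    fun k _ => my_cs _ _ (hst k) F hFmeas hFpos (hF2int k)
  have hpneg : p < -1 := by
    rw [hp, div_lt_iff_of_neg (by linarith : γ - 1 < 0)]
    linarith
  have hpneg0 : p < 0 := by linarith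
  -- part 2
  have part2 : ∀ k : ℕ, 1 ≤ k →
      (t k - s k) * (∫ x in s k..t k, F x ^ 2) ≤
        (3 * max c 0) * (2 : ℝ) ^ (k + 1) * ((2 : ℝ) ^ (k - 1)) ^ p := by
    intro k hk
    have hA0 : (0:ℝ) ≤ ∫ x in s k..t k, F x ^ 2 :=
      intervalIntegral.integral_nonneg (hst k) (fun x _ => sq_nonneg _)
    have ht0 : (0:ℝ) ≤ t k := le_trans (hs0 k) (hst k)
    have hAle : (∫ x in s k..t k, F x ^ 2) ≤ c * (t (k-1) - s (k-1)) ^ p := by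
      calc (∫ x in s k..t k, F x ^ 2) ≤ J (s k) - J (t k) := hsq k
        _ ≤ J (s k) - Jinf := by have := hJlow (t k) ht0; linarith
        _ ≤ c * (t (k-1) - s (k-1)) ^ p := hJk k hk
    have hD : (2:ℝ) ^ (k-1) ≤ t (k-1) - s (k-1) := (hlen (k-1)).1
    have hD0 : (0:ℝ) < (2:ℝ) ^ (k-1) := by positivity
    have hrp : (t (k-1) - s (k-1)) ^ p ≤ ((2:ℝ) ^ (k-1)) ^ p :=
      Real.rpow_le_rpow_of_nonpos hD0 hD (le_of_lt hpneg0)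
    have hrp0 : (0:ℝ) ≤ (t (k-1) - s (k-1)) ^ p :=
      Real.rpow_nonneg (by linarith) _
    have hAle2 : (∫ x in s k..t k, F x ^ 2) ≤ max c 0 * ((2:ℝ) ^ (k-1)) ^ p := by
      calc (∫ x in s k..t k, F x ^ 2) ≤ c * (t (k-1) - s (k-1)) ^ p := hAle
        _ ≤ max c 0 * (t (k-1) - s (k-1)) ^ p :=
            mul_le_mul_of_nonneg_right (le_max_left _ _) hrp0
        _ ≤ max c 0 * ((2:ℝ) ^ (k-1)) ^ p :=
            mul_le_mul_of_nonneg_left hrp (le_max_right _ _)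
    have hts : t k - s k ≤ 3 * (2:ℝ) ^ (k+1) := le_of_lt (hlen k).2
    have hts0 : (0:ℝ) ≤ t k - s k := sub_nonneg.mpr (hst k)
    calc (t k - s k) * (∫ x in s k..t k, F x ^ 2)
        ≤ (3 * (2:ℝ) ^ (k+1)) * (max c 0 * ((2:ℝ) ^ (k-1)) ^ p) :=
          mul_le_mul hts hAle2 hA0 (by positivity)
      _ = (3 * max c 0) * (2 : ℝ) ^ (k + 1) * ((2 : ℝ) ^ (k - 1)) ^ p := by ring
  refine ⟨part1, ⟨3 * max c 0, by positivity, part2⟩, ?_⟩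
  -- part 3
  set c' : ℝ := 3 * max c 0 with hc'
  have hc'0 : (0:ℝ) ≤ c' := by positivity
  set C : ℝ := c' * 2 * (2:ℝ) ^ (-p) with hC
  have hC0 : (0:ℝ) ≤ C := by positivity
  set r : ℝ := (2:ℝ) ^ ((1 + p)/2) with hr
  have hr0 : (0:ℝ) ≤ r := Real.rpow_nonneg (by norm_num) _
  have hr1 : r < 1 := Real.rpow_lt_one_of_one_lt_of_neg one_lt_two (by linarith)
  set M : ℝ := Real.sqrt C with hM
  have hEq : ∀ k : ℕ, 1 ≤ k →
      c' * (2:ℝ) ^ (k+1) * ((2:ℝ) ^ (k-1)) ^ p = C * ((2:ℝ)^((1+p)))^k := by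
    intro k hk
    have h2 : (0:ℝ) < 2 := two_pos
    have e1 : ((2:ℝ) ^ (k-1:ℕ)) = (2:ℝ) ^ (((k:ℝ)) - 1) := by
      rw [← Real.rpow_natCast 2 (k-1), Nat.cast_sub hk, Nat.cast_one]
    have e2 : ((2:ℝ) ^ (k+1:ℕ)) = (2:ℝ) ^ ((k:ℝ) + 1) := by
      rw [← Real.rpow_natCast 2 (k+1)]; push_cast; ring_nf
    have e3 : ((2:ℝ)^((1+p)))^k = (2:ℝ) ^ ((1+p) * k) := by
      rw [← Real.rpow_natCast ((2:ℝ)^(1+p)) k, ← Real.rpow_mul (le_of_lt h2)]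
    have he : ((k:ℝ)+1) + ((k:ℝ)-1)*p = (1 + -p) + (1+p)*(k:ℝ) := by ring
    rw [e1, e2, e3, ← Real.rpow_mul (le_of_lt h2), hC, mul_assoc,
      ← Real.rpow_add h2, he, Real.rpow_add h2 (1 + -p) ((1+p)*(k:ℝ)),
      Real.rpow_add h2 1 (-p), Real.rpow_one, ← mul_assoc, ← mul_assoc]
  have hr2 : r ^ 2 = (2:ℝ) ^ (1 + p) := by
    rw [hr, ← Real.rpow_natCast ((2:ℝ)^((1+p)/2)) 2, ← Real.rpow_mul (by norm_num : (0:ℝ) ≤ 2)]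
    norm_num
  have key : ∀ k : ℕ, 1 ≤ k → (∫ x in s k..t k, F x) ≤ M * r ^ k := by
    intro k hk
    have hg0 : (0:ℝ) ≤ ∫ x in s k..t k, F x :=
      intervalIntegral.integral_nonneg (hst k) (fun x _ => hFpos x)
    have hb0 : (0:ℝ) ≤ M * r ^ k := by positivity
    have hMr : (M * r ^ k) ^ 2 = C * ((2:ℝ)^(1+p))^k := by
      rw [mul_pow, hM, Real.sq_sqrt hC0, pow_right_comm, hr2]
    have hsq2 : (∫ x in s k..t k, F x) ^ 2 ≤ (M * r ^ k) ^ 2 := by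
      rw [hMr, ← hEq k hk]
      exact le_trans (part1 k hk) (part2 k hk)
    calc (∫ x in s k..t k, F x) = Real.sqrt ((∫ x in s k..t k, F x) ^ 2) :=
          (Real.sqrt_sq hg0).symm
      _ ≤ Real.sqrt ((M * r ^ k) ^ 2) := Real.sqrt_le_sqrt hsq2
      _ = M * r ^ k := Real.sqrt_sq hb0
  have hsum : Summable (fun n : ℕ => M * r ^ n) :=
    (summable_geometric_of_lt_one hr0 hr1).mul_left M
  have hsum1 : Summable (fun n : ℕ => M * r ^ (n + 1)) :=
    (summable_nat_add_iff 1).mpr hsum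
  refine (summable_nat_add_iff 1).mp ?_
  exact Summable.of_nonneg_of_le
    (fun n => intervalIntegral.integral_nonneg (hst (n+1)) (fun x _ => hFpos x))
    (fun n => key (n + 1) (Nat.le_add_left 1 n)) hsum1
end
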